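/- Let 0 < m ≤ L < L̄, set δ_L = (L̄ − L)/L̄, and let δ_λ > 0. Let s ∈ (0, L̄] and ℓ ∈ [m, L] with |s − ℓ| ≥ δ_λ, and let ζ, ξ denote the two complex eigenvalues of Ḡ(s, ℓ). Then |ζ − ξ| = ((1 + β̄(s))/L̄) · sqrt( (L̄ − ℓ)·|s − ℓ| ); in particular |ζ − ξ| ≥ sqrt( δ_L δ_λ / L̄ ), so the two eigenvalues are separated by a positive amount independent of s and ℓ. -/

import Mathlib

/-- `β(s) = (√L − √s)/(√L + √s)`. -/
noncomputable def momBeta (L s : ℝ) : ℝ :=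
  (Real.sqrt L - Real.sqrt s) / (Real.sqrt L + Real.sqrt s)

/-- The complex square root of a real number: `√x` if `x ≥ 0`, `i√(−x)` otherwise. -/
noncomputable def csqrt (x : ℝ) : ℂ :=
  if 0 ≤ x then ((Real.sqrt x : ℝ) : ℂ) else Complex.I * ((Real.sqrt (-x) : ℝ) : ℂ)

/-- The discriminant `((1+β(s))²/4)(1 − ℓ/L)² − β(s)(1 − ℓ/L)`. -/
noncomputable def discr (L s ℓ : ℝ) : ℝ :=
  ((1 + momBeta L s) / 2) ^ 2 * (1 - ℓ / L) ^ 2 - momBeta L s * (1 - ℓ / L)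

/-- The eigenvalue `((1+β(s))/2)(1 − ℓ/L) + sqrt(discriminant)` of `G(s, ℓ)`. -/
noncomputable def eigP (L s ℓ : ℝ) : ℂ :=
  (((1 + momBeta L s) / 2 * (1 - ℓ / L) : ℝ) : ℂ) + csqrt (discr L s ℓ)

/-- The eigenvalue `((1+β(s))/2)(1 − ℓ/L) − sqrt(discriminant)` of `G(s, ℓ)`. -/
noncomputable def eigM (L s ℓ : ℝ) : ℂ :=
  (((1 + momBeta L s) / 2 * (1 - ℓ / L) : ℝ) : ℂ) - csqrt (discr L s ℓ)

/-- `ρ(s, ℓ)`: the maximum modulus of the two eigenvalues of `G(s, ℓ)`. -/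
noncomputable def specRho (L s ℓ : ℝ) : ℝ :=
  max ‖eigP L s ℓ‖ ‖eigM L s ℓ‖

/-!
The two eigenvalues differ by twice a square root of the discriminant, and the identity
`4 β̄(s) L̄ = (1 + β̄(s))² (L̄ − s)` factors the discriminant as
`((1 + β̄(s)) / (2L̄))² (L̄ − ℓ)(s − ℓ)`. Taking moduli gives the exact gap; the lower bound
follows from `1 ≤ 1 + β̄(s)`, `L̄ − L ≤ L̄ − ℓ` and `δ_λ ≤ |s − ℓ|`.
-/

theorem norm_csqrt (x : ℝ) : ‖csqrt x‖ = Real.sqrt |x| := by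
  unfold csqrt
  split_ifs with h
  · rw [abs_of_nonneg h, Complex.norm_real, Real.norm_of_nonneg (Real.sqrt_nonneg _)]
  · rw [abs_of_neg (not_le.mp h), norm_mul, Complex.norm_I, Complex.norm_real,
      Real.norm_of_nonneg (Real.sqrt_nonneg _), one_mul]

theorem momBeta_nonneg {L s : ℝ} (hsL : s ≤ L) : 0 ≤ momBeta L s :=
  div_nonneg (sub_nonneg.mpr (Real.sqrt_le_sqrt hsL)) (by positivity)

theorem momBeta_mul_four_mul {L s : ℝ} (hL : 0 < L) (hs : 0 ≤ s) :
    momBeta L s * (4 * L) = (1 + momBeta L s) ^ 2 * (L - s) := by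
  have hsqL : Real.sqrt L ^ 2 = L := Real.sq_sqrt hL.le
  have hsqs : Real.sqrt s ^ 2 = s := Real.sq_sqrt hs
  have : 0 < Real.sqrt L + Real.sqrt s := by positivity
  unfold momBeta
  field_simp
  linear_combination (4 * s) * hsqL - (4 * L) * hsqs

theorem discr_eq {L s : ℝ} (hL : 0 < L) (hs : 0 ≤ s) (ℓ : ℝ) :
    discr L s ℓ = ((1 + momBeta L s) / (2 * L)) ^ 2 * ((L - ℓ) * (s - ℓ)) := by
  unfold discr
  field_simp
  linear_combination (-(L - ℓ)) * momBeta_mul_four_mul hL hs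

theorem eigP_sub_eigM (L s ℓ : ℝ) : eigP L s ℓ - eigM L s ℓ = 2 * csqrt (discr L s ℓ) := by
  unfold eigP eigM
  ring

theorem norm_eigP_sub_eigM {L s ℓ : ℝ} (hs : 0 < s) (hsL : s ≤ L) (hℓL : ℓ ≤ L) :
    ‖eigP L s ℓ - eigM L s ℓ‖ = (1 + momBeta L s) / L * Real.sqrt ((L - ℓ) * |s - ℓ|) := by
  have hL : 0 < L := hs.trans_le hsL
  have hβ := momBeta_nonneg hsL
  have habs : |discr L s ℓ| = ((1 + momBeta L s) / (2 * L)) ^ 2 * ((L - ℓ) * |s - ℓ|) := by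
    rw [discr_eq hL hs.le, abs_mul, abs_mul, abs_of_nonneg (sq_nonneg _),
      abs_of_nonneg (sub_nonneg.mpr hℓL)]
  rw [eigP_sub_eigM, norm_mul, norm_csqrt, habs, Real.sqrt_mul (sq_nonneg _),
    Real.sqrt_sq (by positivity), Complex.norm_two]
  field_simp

theorem stmt14_general {Lbar L dLam : ℝ} (hLLbar : L < Lbar)
    {s ℓ : ℝ} (hs0 : 0 < s) (hsLbar : s ≤ Lbar)
    (hlL : ℓ ≤ L) (hsep : dLam ≤ |s - ℓ|) :
    ‖eigP Lbar s ℓ - eigM Lbar s ℓ‖ =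
      (1 + momBeta Lbar s) / Lbar * Real.sqrt ((Lbar - ℓ) * |s - ℓ|) ∧
    Real.sqrt ((Lbar - L) / Lbar * dLam / Lbar) ≤
      ‖eigP Lbar s ℓ - eigM Lbar s ℓ‖ := by
  have hgap := norm_eigP_sub_eigM hs0 hsLbar (hlL.trans hLLbar.le)
  refine ⟨hgap, hgap ▸ ?_⟩
  have hLbar : 0 < Lbar := hs0.trans_le hsLbar
  have hprod : (Lbar - L) * dLam ≤ (Lbar - ℓ) * |s - ℓ| := calc
    (Lbar - L) * dLam ≤ (Lbar - L) * |s - ℓ| := by gcongr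
    _ ≤ (Lbar - ℓ) * |s - ℓ| := by gcongr
  calc Real.sqrt ((Lbar - L) / Lbar * dLam / Lbar)
      = Real.sqrt ((Lbar - L) * dLam) / Lbar := by
        rw [show (Lbar - L) / Lbar * dLam / Lbar = (Lbar - L) * dLam / Lbar ^ 2 by ring,
          Real.sqrt_div' _ (sq_nonneg Lbar), Real.sqrt_sq hLbar.le]
    _ ≤ Real.sqrt ((Lbar - ℓ) * |s - ℓ|) / Lbar := by gcongr
    _ ≤ (1 + momBeta Lbar s) / Lbar * Real.sqrt ((Lbar - ℓ) * |s - ℓ|) := by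
        rw [div_mul_eq_mul_div]
        gcongr ?_ / _
        exact le_mul_of_one_le_left (Real.sqrt_nonneg _) (by linarith [momBeta_nonneg hsLbar])

/-- (Lemma `la:lem:Gi-eigenvalue-separation`.) For
`0 < m ≤ L < L̄`, `δ_L = (L̄ − L)/L̄`, `δ_λ > 0`, `s ∈ (0, L̄]`, `ℓ ∈ [m, L]`
with `|s − ℓ| ≥ δ_λ`, the two eigenvalues `ζ, ξ` of `Ḡ(s, ℓ)` satisfy
`|ζ − ξ| = ((1 + β̄(s))/L̄)√((L̄ − ℓ)|s − ℓ|) ≥ √(δ_L δ_λ / L̄)`. -/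
theorem stmt14 {Lbar L m dLam : ℝ} (hm : 0 < m) (hmL : m ≤ L) (hLLbar : L < Lbar)
    (hdLam : 0 < dLam) {s ℓ : ℝ} (hs0 : 0 < s) (hsLbar : s ≤ Lbar)
    (hlm : m ≤ ℓ) (hlL : ℓ ≤ L) (hsep : dLam ≤ |s - ℓ|) :
    ‖eigP Lbar s ℓ - eigM Lbar s ℓ‖ =
      (1 + momBeta Lbar s) / Lbar * Real.sqrt ((Lbar - ℓ) * |s - ℓ|) ∧
    Real.sqrt ((Lbar - L) / Lbar * dLam / Lbar) ≤
      ‖eigP Lbar s ℓ - eigM Lbar s ℓ‖ :=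
  stmt14_general hLLbar hs0 hsLbar hlL hsep
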